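/- If {N_1} is an operator with 0 ≤ N_1 ≤ I on B_1, σ is a state on B_1 ⊗ B_2 with marginal σ_{B_1} satisfying tr(N_1 σ_{B_1}) ≥ 1 − √δ, and N_2 with 0 ≤ N_2 ≤ I on B_2, then tr((N_1 ⊗ N_2) σ) ≥ tr(N_1 σ_{B_1})·tr(N_2 σ_{B_2}) − 4 δ^{1/4}. -/

import Mathlib

open scoped Kronecker BigOperators ComplexOrder
open Matrix

noncomputable def traceNorm {n : Type*} [Fintype n] [DecidableEq n] (X : Matrix n n ℂ) : ℝ :=
  (((Matrix.posSemidef_conjTranspose_mul_self X).1.eigenvectorUnitary.1 *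
    diagonal (((↑) : ℝ → ℂ) ∘ (√·) ∘ (Matrix.posSemidef_conjTranspose_mul_self X).1.eigenvalues) *
    (star (Matrix.posSemidef_conjTranspose_mul_self X).1.eigenvectorUnitary : Matrix n n ℂ)).trace).re

def IsDensity {n : Type*} [Fintype n] (ρ : Matrix n n ℂ) : Prop :=
  ρ.PosSemidef ∧ ρ.trace = 1

def IsPOVM {ι n : Type*} [Fintype ι] [Fintype n] [DecidableEq n] (M : ι → Matrix n n ℂ) : Prop :=
  (∀ k, (M k).PosSemidef) ∧ ∑ k, M k = 1

noncomputable def ptraceR {a b : Type*} [Fintype b] (ρ : Matrix (a × b) (a × b) ℂ) :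
    Matrix a a ℂ :=
  Matrix.of fun i j => ∑ k, ρ (i, k) (j, k)

noncomputable def ptraceL {a b : Type*} [Fintype a] (ρ : Matrix (a × b) (a × b) ℂ) :
    Matrix b b ℂ :=
  Matrix.of fun i j => ∑ k, ρ (k, i) (k, j)

noncomputable def vN {n : Type*} [Fintype n] [DecidableEq n] (ρ : Matrix n n ℂ) : ℝ :=
  if h : ρ.IsHermitian then -∑ i, h.eigenvalues i * Real.logb 2 (h.eigenvalues i) else 0

noncomputable def mutInfo {a b : Type*} [Fintype a] [DecidableEq a] [Fintype b] [DecidableEq b]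
    (ρ : Matrix (a × b) (a × b) ℂ) : ℝ :=
  vN (ptraceR ρ) + vN (ptraceL ρ) - vN ρ

noncomputable def tensExt {a b r : Type*} (Λ : Matrix a a ℂ → Matrix b b ℂ)
    (X : Matrix (a × r) (a × r) ℂ) : Matrix (b × r) (b × r) ℂ :=
  Matrix.of fun p q => Λ (Matrix.of fun i j => X (i, p.2) (j, q.2)) p.1 q.1

noncomputable def tensExt2 {a b c : Type*} (Λ : Matrix b b ℂ → Matrix c c ℂ)
    (X : Matrix (a × b) (a × b) ℂ) : Matrix (a × c) (a × c) ℂ :=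
  Matrix.of fun p q => Λ (Matrix.of fun k l => X (p.1, k) (q.1, l)) p.2 q.2

noncomputable def diamondNorm {a b : Type*} [Fintype a] [DecidableEq a] [Fintype b] [DecidableEq b]
    (Λ : Matrix a a ℂ → Matrix b b ℂ) : ℝ :=
  ⨆ r : ℕ, ⨆ X : Matrix (a × Fin r) (a × Fin r) ℂ, traceNorm (tensExt Λ X) / traceNorm X

def IsCPTP {a b : Type*} [Fintype a] [DecidableEq a] [Fintype b] [DecidableEq b]
    (Λ : Matrix a a ℂ → Matrix b b ℂ) : Prop :=
  IsLinearMap ℂ Λ ∧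
  (∀ (r : ℕ) (X : Matrix (a × Fin r) (a × Fin r) ℂ), X.PosSemidef → (tensExt Λ X).PosSemidef) ∧
  (∀ X, (Λ X).trace = X.trace)

noncomputable def choi {a b : Type*} [Fintype a] [DecidableEq a]
    (Λ : Matrix a a ℂ → Matrix b b ℂ) : Matrix (a × b) (a × b) ℂ :=
  Matrix.of fun p q => (Fintype.card a : ℂ)⁻¹ * Λ (Matrix.single p.1 q.1 1) p.2 q.2

noncomputable def binEnt (x : ℝ) : ℝ :=
  -x * Real.logb 2 x - (1 - x) * Real.logb 2 (1 - x)

noncomputable def qcChannel {b ι : Type*} [Fintype b] [DecidableEq ι]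
    (N : ι → Matrix b b ℂ) : Matrix b b ℂ → Matrix ι ι ℂ :=
  fun X => Matrix.of fun l l' => if l = l' then (N l * X).trace else 0

noncomputable def extj {n : ℕ} {β : Fin n → Type*} (j : Fin n) (x : β j)
    (g : ∀ i : {i : Fin n // i ≠ j}, β i) : ∀ i, β i :=
  fun i => if h : i = j then cast (congrArg β h).symm x else g ⟨i, h⟩

noncomputable def ptraceTo {n : ℕ} {β : Fin n → Type*} [∀ i, Fintype (β i)]
    [∀ i, DecidableEq (β i)] (j : Fin n)
    (M : Matrix (∀ i, β i) (∀ i, β i) ℂ) : Matrix (β j) (β j) ℂ :=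
  Matrix.of fun x y => ∑ g : ∀ i : {i : Fin n // i ≠ j}, β i, M (extj j x g) (extj j y g)

def extS {n : ℕ} {β : Fin n → Type*} (S : Finset (Fin n))
    (g : ∀ i : {i : Fin n // i ∈ S}, β i) (f : ∀ i : {i : Fin n // i ∉ S}, β i) : ∀ i, β i :=
  fun i => if h : i ∈ S then g ⟨i, h⟩ else f ⟨i, h⟩

noncomputable def margA {a : Type*} {n : ℕ} {β : Fin n → Type*} [∀ i, Fintype (β i)]
    (S : Finset (Fin n)) (ρ : Matrix (a × (∀ i, β i)) (a × (∀ i, β i)) ℂ) :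
    Matrix (a × (∀ i : {i : Fin n // i ∈ S}, β i)) (a × (∀ i : {i : Fin n // i ∈ S}, β i)) ℂ :=
  Matrix.of fun p q =>
    ∑ f : ∀ i : {i : Fin n // i ∉ S}, β i, ρ (p.1, extS S p.2 f) (q.1, extS S q.2 f)

noncomputable def measExt {a b ι : Type*} [Fintype b] [DecidableEq ι]
    (N : ι → Matrix b b ℂ) (L : Matrix (a × b) (a × b) ℂ) : Matrix (a × ι) (a × ι) ℂ :=
  Matrix.of fun p q =>
    if p.2 = q.2 then (N p.2 * Matrix.of (fun k k' => L (p.1, k) (q.1, k'))).trace else 0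

noncomputable def phiVec (d : ℕ) : Fin d × Fin d → ℂ :=
  fun p => if p.1 = p.2 then ((Real.sqrt d : ℝ) : ℂ)⁻¹ else 0

noncomputable def extSj {n : ℕ} {β : Fin n → Type*} (S : Finset (Fin n)) (j : Fin n)
    (g : ∀ i : {i : Fin n // i ∈ S}, β i) (w : β j)
    (f : ∀ i : {i : Fin n // i ∉ S ∧ i ≠ j}, β i) : ∀ i, β i :=
  fun i =>
    if h : i ∈ S then g ⟨i, h⟩
    else if h2 : i = j then cast (congrArg β h2).symm w
    else f ⟨i, ⟨h, h2⟩⟩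

noncomputable def margMeas {a : Type*} {n : ℕ} {β : Fin n → Type*} [∀ i, Fintype (β i)]
    (S : Finset (Fin n)) (j : Fin n) {m : ℕ} (N : Fin m → Matrix (β j) (β j) ℂ)
    (π : Matrix (a × (∀ i, β i)) (a × (∀ i, β i)) ℂ) :
    Matrix (a × ((∀ i : {i : Fin n // i ∈ S}, β i) × Fin m))
           (a × ((∀ i : {i : Fin n // i ∈ S}, β i) × Fin m)) ℂ :=
  Matrix.of fun p q =>
    if p.2.2 = q.2.2 then
      ∑ f : ∀ i : {i : Fin n // i ∉ S ∧ i ≠ j}, β i, ∑ u : β j, ∑ v : β j,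
        N p.2.2 u v * π (p.1, extSj S j p.2.1 v f) (q.1, extSj S j q.2.1 u f)
    else 0

/-! Positivity of `(1 - N₁) ⊗ₖ (1 - N₂)` gives the Bonferroni-type bound
`tr((N₁ ⊗ₖ N₂) σ) ≥ t₁ + t₂ - 1` for the marginal expectations `tᵢ = tr(Nᵢ σ_{Bᵢ})`, whence
`t₁ t₂ - tr((N₁ ⊗ₖ N₂) σ) ≤ (1 - t₁)(1 - t₂) ≤ 1 - t₁ ≤ √δ ≤ δ^{1/4}`. -/

namespace Matrix

variable {α l m n p 𝕜 : Type*}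

theorem sub_kronecker [NonUnitalNonAssocRing α] (A₁ A₂ : Matrix l m α) (B : Matrix n p α) :
    (A₁ - A₂) ⊗ₖ B = A₁ ⊗ₖ B - A₂ ⊗ₖ B := by
  ext; simp [sub_mul]

theorem kronecker_sub [NonUnitalNonAssocRing α] (A : Matrix l m α) (B₁ B₂ : Matrix n p α) :
    A ⊗ₖ (B₁ - B₂) = A ⊗ₖ B₁ - A ⊗ₖ B₂ := by
  ext; simp [mul_sub]

open scoped MatrixOrder in
theorem PosSemidef.trace_mul_nonneg [RCLike 𝕜] [Fintype n] {A B : Matrix n n 𝕜}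
    (hA : A.PosSemidef) (hB : B.PosSemidef) : 0 ≤ (A * B).trace := by
  classical
  obtain ⟨C, rfl⟩ := CStarAlgebra.nonneg_iff_eq_star_mul_self.mp hA.nonneg
  rw [star_eq_conjTranspose, Matrix.mul_assoc, trace_mul_comm]
  simpa [Matrix.mul_assoc] using (hB.mul_mul_conjTranspose_same C).trace_nonneg

end Matrix

section PartialTrace

variable {a b : Type*}

theorem ptraceR_eq_sum_submatrix [Fintype b] (ρ : Matrix (a × b) (a × b) ℂ) :
    ptraceR ρ = ∑ k, ρ.submatrix (·, k) (·, k) := by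
  ext; simp [ptraceR, Matrix.sum_apply]

theorem ptraceL_eq_sum_submatrix [Fintype a] (ρ : Matrix (a × b) (a × b) ℂ) :
    ptraceL ρ = ∑ k, ρ.submatrix (k, ·) (k, ·) := by
  ext; simp [ptraceL, Matrix.sum_apply]

theorem Matrix.PosSemidef.ptraceR [Fintype b] {ρ : Matrix (a × b) (a × b) ℂ}
    (hρ : ρ.PosSemidef) : (ptraceR ρ).PosSemidef := by
  rw [ptraceR_eq_sum_submatrix]
  exact posSemidef_sum _ fun k _ => hρ.submatrix _

theorem Matrix.PosSemidef.ptraceL [Fintype a] {ρ : Matrix (a × b) (a × b) ℂ}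
    (hρ : ρ.PosSemidef) : (ptraceL ρ).PosSemidef := by
  rw [ptraceL_eq_sum_submatrix]
  exact posSemidef_sum _ fun k _ => hρ.submatrix _

theorem trace_ptraceR [Fintype a] [Fintype b] (ρ : Matrix (a × b) (a × b) ℂ) :
    (ptraceR ρ).trace = ρ.trace := by
  simp [ptraceR, trace, Fintype.sum_prod_type]

theorem trace_kronecker_one_mul [Fintype a] [Fintype b] [DecidableEq b] (A : Matrix a a ℂ)
    (ρ : Matrix (a × b) (a × b) ℂ) :
    ((A ⊗ₖ (1 : Matrix b b ℂ)) * ρ).trace = (A * ptraceR ρ).trace := by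
  simp only [trace, diag_apply, mul_apply, kroneckerMap_apply, one_apply, mul_ite, mul_one,
    mul_zero, ite_mul, zero_mul, Fintype.sum_prod_type, Finset.sum_ite_eq, Finset.mem_univ,
    if_true, ptraceR, of_apply, Finset.mul_sum]
  exact Finset.sum_congr rfl fun _ _ => Finset.sum_comm

theorem trace_one_kronecker_mul [Fintype a] [Fintype b] [DecidableEq a] (B : Matrix b b ℂ)
    (ρ : Matrix (a × b) (a × b) ℂ) :
    (((1 : Matrix a a ℂ) ⊗ₖ B) * ρ).trace = (B * ptraceL ρ).trace := by
  simp only [trace, diag_apply, mul_apply, kroneckerMap_apply, one_apply, ite_mul, one_mul,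
    zero_mul, Fintype.sum_prod_type, Finset.sum_ite_irrel, Finset.sum_const_zero,
    Finset.sum_ite_eq, Finset.mem_univ, if_true, ptraceL, of_apply, Finset.mul_sum]
  rw [Finset.sum_comm]
  exact Finset.sum_congr rfl fun _ _ => Finset.sum_comm

theorem re_trace_mul_ptraceR_le_one [Fintype a] [DecidableEq a] [Fintype b]
    {A : Matrix a a ℂ} {ρ : Matrix (a × b) (a × b) ℂ}
    (hA : (1 - A).PosSemidef) (hρ : IsDensity ρ) : (A * ptraceR ρ).trace.re ≤ 1 := by
  have h := (Complex.nonneg_iff.mp (hA.trace_mul_nonneg hρ.1.ptraceR)).1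
  rw [sub_mul, one_mul, trace_sub, trace_ptraceR, hρ.2, Complex.sub_re] at h
  simpa using h

variable [Fintype a] [DecidableEq a] [Fintype b] [DecidableEq b]

theorem trace_one_sub_kronecker_one_sub_mul (A : Matrix a a ℂ) (B : Matrix b b ℂ)
    (ρ : Matrix (a × b) (a × b) ℂ) :
    (((1 - A) ⊗ₖ (1 - B)) * ρ).trace =
      ρ.trace - (A * ptraceR ρ).trace - (B * ptraceL ρ).trace + ((A ⊗ₖ B) * ρ).trace := by
  rw [sub_kronecker, kronecker_sub, kronecker_sub, one_kronecker_one]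
  simp only [sub_mul, trace_sub, one_mul, trace_kronecker_one_mul, trace_one_kronecker_mul]
  ring

theorem le_re_trace_kronecker_mul {A : Matrix a a ℂ} {B : Matrix b b ℂ}
    {ρ : Matrix (a × b) (a × b) ℂ}
    (hA : (1 - A).PosSemidef) (hB : (1 - B).PosSemidef) (hρ : IsDensity ρ) :
    (A * ptraceR ρ).trace.re + (B * ptraceL ρ).trace.re - 1 ≤ ((A ⊗ₖ B) * ρ).trace.re := by
  have h := (Complex.nonneg_iff.mp ((hA.kronecker hB).trace_mul_nonneg hρ.1)).1
  rw [trace_one_sub_kronecker_one_sub_mul, hρ.2] at h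
  simp only [Complex.add_re, Complex.sub_re, Complex.one_re] at h
  linarith

end PartialTrace

theorem stmt14_general {b₁ b₂ : Type*} [Fintype b₁] [DecidableEq b₁] [Fintype b₂] [DecidableEq b₂]
    (N₁ : Matrix b₁ b₁ ℂ) (N₂ : Matrix b₂ b₂ ℂ)
    (h₁' : (1 - N₁).PosSemidef)
    (h₂ : N₂.PosSemidef) (h₂' : (1 - N₂).PosSemidef)
    (σ : Matrix (b₁ × b₂) (b₁ × b₂) ℂ) (hσ : IsDensity σ)
    (δ : ℝ) (hδ0 : 0 ≤ δ) (hδ1 : δ ≤ 1)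
    (h : 1 - Real.sqrt δ ≤ ((N₁ * ptraceR σ).trace).re) :
    ((N₁ * ptraceR σ).trace).re * ((N₂ * ptraceL σ).trace).re - 4 * δ ^ ((1 : ℝ) / 4)
      ≤ (((N₁ ⊗ₖ N₂) * σ).trace).re := by
  set t₁ := (N₁ * ptraceR σ).trace.re
  set t₂ := (N₂ * ptraceL σ).trace.re
  have ht₁ : t₁ ≤ 1 := re_trace_mul_ptraceR_le_one h₁' hσ
  have ht₂ : 0 ≤ t₂ := (Complex.nonneg_iff.mp (h₂.trace_mul_nonneg hσ.1.ptraceL)).1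
  have hδ : Real.sqrt δ ≤ δ ^ ((1 : ℝ) / 4) := by
    rw [Real.sqrt_eq_rpow]
    exact Real.rpow_le_rpow_of_exponent_ge' hδ0 hδ1 (by norm_num) (by norm_num)
  have hloss : (1 - t₁) * (1 - t₂) ≤ 4 * δ ^ ((1 : ℝ) / 4) :=
    calc (1 - t₁) * (1 - t₂) ≤ 1 - t₁ := mul_le_of_le_one_right (by linarith) (by linarith)
      _ ≤ δ ^ ((1 : ℝ) / 4) := by linarith
      _ ≤ 4 * δ ^ ((1 : ℝ) / 4) := by linarith [Real.rpow_nonneg hδ0 ((1 : ℝ) / 4)]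
  calc t₁ * t₂ - 4 * δ ^ ((1 : ℝ) / 4) ≤ t₁ + t₂ - 1 := by linarith
    _ ≤ (N₁ ⊗ₖ N₂ * σ).trace.re := le_re_trace_kronecker_mul h₁' h₂' hσ

/-- product measurement on a bipartite state versus product of marginals. -/
theorem stmt14 {b₁ b₂ : Type*} [Fintype b₁] [DecidableEq b₁] [Fintype b₂] [DecidableEq b₂]
    (N₁ : Matrix b₁ b₁ ℂ) (N₂ : Matrix b₂ b₂ ℂ)
    (h₁ : N₁.PosSemidef) (h₁' : (1 - N₁).PosSemidef)
    (h₂ : N₂.PosSemidef) (h₂' : (1 - N₂).PosSemidef)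
    (σ : Matrix (b₁ × b₂) (b₁ × b₂) ℂ) (hσ : IsDensity σ)
    (δ : ℝ) (hδ0 : 0 ≤ δ) (hδ1 : δ ≤ 1)
    (h : 1 - Real.sqrt δ ≤ ((N₁ * ptraceR σ).trace).re) :
    ((N₁ * ptraceR σ).trace).re * ((N₂ * ptraceL σ).trace).re - 4 * δ ^ ((1 : ℝ) / 4)
      ≤ (((N₁ ⊗ₖ N₂) * σ).trace).re :=
  stmt14_general N₁ N₂ h₁' h₂ h₂' σ hσ δ hδ0 hδ1 h
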